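/- Let C be a nonempty closed convex subset of a real Hilbert space and define s(x) = ‖x − P_C(x)‖². Then s is differentiable with gradient ∇s(x) = 2(x − P_C(x)). -/
import Mathlib

open RealInnerProductSpace

/-- Variational inequality for the metric projection. -/
lemma proj_inner_le_zero
    {H : Type*} [NormedAddCommGroup H] [InnerProductSpace ℝ H]
    (C : Set H) (hCconv : Convex ℝ C)
    (P : H → H)
    (hP : ∀ x : H, P x ∈ C ∧ ∀ z ∈ C, ‖x - P x‖ ≤ ‖x - z‖)
    (x : H) : ∀ z ∈ C, ⟪x - P x, z - P x⟫ ≤ 0 := by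
  have hmem := (hP x).1
  have h : ‖x - P x‖ = ⨅ w : C, ‖x - w‖ := by
    haveI : Nonempty C := ⟨⟨P x, hmem⟩⟩
    refine le_antisymm (le_ciInf fun w => (hP x).2 w w.2) ?_
    have hbdd : BddBelow (Set.range fun w : C => ‖x - (w : H)‖) := by
      refine ⟨0, ?_⟩
      rintro _ ⟨w, rfl⟩
      exact norm_nonneg _
    exact ciInf_le hbdd ⟨P x, hmem⟩
  exact (norm_eq_iInf_iff_real_inner_le_zero hCconv hmem).mp h

/-- The metric projection is nonexpansive. -/
lemma proj_nonexpansive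
    {H : Type*} [NormedAddCommGroup H] [InnerProductSpace ℝ H]
    (C : Set H) (hCconv : Convex ℝ C)
    (P : H → H)
    (hP : ∀ x : H, P x ∈ C ∧ ∀ z ∈ C, ‖x - P x‖ ≤ ‖x - z‖)
    (x y : H) : ‖P y - P x‖ ≤ ‖y - x‖ := by
  have h1 := proj_inner_le_zero C hCconv P hP x (P y) (hP y).1
  have h2 := proj_inner_le_zero C hCconv P hP y (P x) (hP x).1
  have key : ‖P y - P x‖ * ‖P y - P x‖ ≤ ⟪y - x, P y - P x⟫ := by
    have : ⟪(y - x) - (P y - P x), P y - P x⟫ ≥ 0 := by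
      have e0 : (y - x) - (P y - P x) = (y - P y) - (x - P x) := by abel
      have e1 : ⟪y - P y, P y - P x⟫ = -⟪y - P y, P x - P y⟫ := by
        rw [← inner_neg_right (𝕜 := ℝ), neg_sub]
      rw [e0, inner_sub_left, e1]
      linarith
    have h := sub_nonneg.mpr this.le
    calc ‖P y - P x‖ * ‖P y - P x‖ = ⟪P y - P x, P y - P x⟫ :=
          (real_inner_self_eq_norm_mul_norm _).symm
      _ ≤ ⟪y - x, P y - P x⟫ := by
          have := inner_sub_left (𝕜 := ℝ) (y - x) (P y - P x) (P y - P x)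
          nlinarith [this]
  rcases eq_or_lt_of_le (norm_nonneg (P y - P x)) with h0 | h0
  · rw [← h0]; exact norm_nonneg _
  · have hc : ⟪y - x, P y - P x⟫ ≤ ‖y - x‖ * ‖P y - P x‖ :=
      real_inner_le_norm _ _
    have := key.trans hc
    exact le_of_mul_le_mul_right this h0

/-- The squared distance `s x = ‖x - P_C x‖²` to a nonempty closed convex set
in a real Hilbert space is differentiable with gradient `2 (x - P_C x)`. -/
theorem sq_dist_gradient
    {H : Type*} [NormedAddCommGroup H] [InnerProductSpace ℝ H] [CompleteSpace H]
    (C : Set H) (hCne : C.Nonempty) (hCc : IsClosed C) (hCconv : Convex ℝ C)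
    (P : H → H)
    (hP : ∀ x : H, P x ∈ C ∧ ∀ z ∈ C, ‖x - P x‖ ≤ ‖x - z‖)
    (x : H) :
    HasGradientAt (fun y => ‖y - P y‖ ^ 2) ((2 : ℝ) • (x - P x)) x := by
  rw [hasGradientAt_iff_isLittleO]
  have key : ∀ y : H,
      ‖‖y - P y‖ ^ 2 - ‖x - P x‖ ^ 2 - ⟪(2 : ℝ) • (x - P x), y - x⟫‖
        ≤ 4 * ‖y - x‖ ^ 2 := by
    intro y
    set u := x - P x with hu
    set h := y - x with hh
    have hupper : ‖y - P y‖ ^ 2 ≤ ‖y - P x‖ ^ 2 := by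
      have := (hP y).2 (P x) (hP x).1
      exact pow_le_pow_left₀ (norm_nonneg _) this 2
    have hyPx : ‖y - P x‖ ^ 2 = ‖u‖ ^ 2 + 2 * ⟪u, h⟫ + ‖h‖ ^ 2 := by
      have : y - P x = u + h := by rw [hu, hh]; abel
      rw [this, norm_add_sq_real]
    have hyPx2 : ‖y - P x‖ ^ 2
        = ‖y - P y‖ ^ 2 + 2 * ⟪y - P y, P y - P x⟫ + ‖P y - P x‖ ^ 2 := by
      have : y - P x = (y - P y) + (P y - P x) := by abel
      rw [this, norm_add_sq_real]
    have hne : ‖P y - P x‖ ≤ ‖h‖ := proj_nonexpansive C hCconv P hP x y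
    have hne2 : ‖(y - P y) - u‖ ≤ 2 * ‖h‖ := by
      have : (y - P y) - u = h - (P y - P x) := by rw [hu, hh]; abel
      rw [this]
      calc ‖h - (P y - P x)‖ ≤ ‖h‖ + ‖P y - P x‖ := norm_sub_le _ _
        _ ≤ 2 * ‖h‖ := by linarith
    have hVI := proj_inner_le_zero C hCconv P hP x (P y) (hP y).1
    have hib : ⟪y - P y, P y - P x⟫ ≤ 2 * ‖h‖ ^ 2 := by
      have hsplit : ⟪y - P y, P y - P x⟫
          = ⟪(y - P y) - u, P y - P x⟫ + ⟪u, P y - P x⟫ := by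
        rw [← inner_add_left]; congr 1; abel
      have h1 : ⟪(y - P y) - u, P y - P x⟫ ≤ ‖(y - P y) - u‖ * ‖P y - P x‖ :=
        real_inner_le_norm _ _
      have h2 : ‖(y - P y) - u‖ * ‖P y - P x‖ ≤ (2 * ‖h‖) * ‖h‖ :=
        mul_le_mul hne2 hne (norm_nonneg _) (by positivity)
      have := hVI
      nlinarith [norm_nonneg h]
    have hinner2 : ⟪(2 : ℝ) • u, h⟫ = 2 * ⟪u, h⟫ := real_inner_smul_left _ _ _
    rw [hinner2]
    have hub : ‖y - P y‖ ^ 2 - ‖u‖ ^ 2 - 2 * ⟪u, h⟫ ≤ ‖h‖ ^ 2 := by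
      nlinarith [hupper, hyPx]
    have hlb : -(4 * ‖h‖ ^ 2) ≤ ‖y - P y‖ ^ 2 - ‖u‖ ^ 2 - 2 * ⟪u, h⟫ := by
      have hsq : ‖P y - P x‖ ^ 2 ≤ ‖h‖ ^ 2 :=
        pow_le_pow_left₀ (norm_nonneg _) hne 2
      nlinarith [hyPx, hyPx2, hib, hsq]
    rw [Real.norm_eq_abs, abs_le]
    constructor <;> nlinarith [norm_nonneg h]
  have hO : (fun y : H => ‖y - P y‖ ^ 2 - ‖x - P x‖ ^ 2
      - ⟪(2 : ℝ) • (x - P x), y - x⟫) =O[nhds x] fun y => ‖y - x‖ ^ 2 := by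
    apply Asymptotics.IsBigO.of_bound 4
    filter_upwards with y
    simpa [Real.norm_eq_abs, abs_of_nonneg (sq_nonneg ‖y - x‖),
      mul_comm] using key y
  exact hO.trans_isLittleO (Asymptotics.isLittleO_pow_sub_sub x one_lt_two)
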